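/- Fix any w ∈ ℝ^L and ε > 0. Let w_{[1]} ≥ … ≥ w_{[L]} denote the order statistics of w, and define k̂(w) = max{ k ∈ [L] : (Σ_{ℓ=1}^k (w_{[ℓ]} − w_{[k]}))² + Σ_{ℓ=1}^k (w_{[ℓ]} − w_{[k]})² ≤ ε² }. Then argmax^ε(w) = { j ∈ [L] : w_j > ε/√2 + Â₁(w) − √(k̂(w)+1) · √( ε²/k̂(w) + (Â₁(w))² − Â₂(w) ) }, where Â₁(w) = (w_{[1]} + … + w_{[k̂(w)]})/k̂(w) and Â₂(w) = (w_{[1]}² + … + w_{[k̂(w)]}²)/k̂(w). -/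

import Mathlib

/-
Write `c = ε/√2`. From the `k̂` largest entries one computes a level `s` and a mass `γ ≥ 0` with
`∑ ℓ (w ℓ - s)⁺ = γ` and `∑ ℓ ((w ℓ - s)⁺)² = ε² - γ²`; that the block `w_[1], …, w_[k̂]` is
exactly the set of entries above `s` is where the maximality of `k̂` enters. The threshold of the
theorem is `s + c - γ`, and `γ ≥ c` because `ε² - γ² ≤ γ²` (a sum of squares of nonnegative
numbers is at most the square of their sum).

If `w j > s + c - γ`, lowering every other coordinate to `s` and raising `w j` to `s + c` gives a
point of `R_j^ε` at squared distance at most `ε² - γ² + ((s + c - w j)⁺)² < ε²`. If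
`w j ≤ s + c - γ`, then `w j ≤ s`; for `v ∈ R_j^ε` bound `(w ℓ - v ℓ)²` below, for `ℓ ≠ j`, by the
tangent line at `s` of `t ↦ ((w ℓ - t)⁺)²` evaluated at `t = v j - c ≥ v ℓ`, and `(w j - v j)²` by
`2γ (v j - w j) - γ²`; summing gives `‖w - v‖² ≥ ε²`.
-/

noncomputable section

/-- The set `R_j^ε = {w ∈ ℝ^L : w_j ≥ max_{ℓ≠j} w_ℓ + ε/√2}`. -/
def Rset (L : ℕ) (ε : ℝ) (j : Fin L) : Set (EuclideanSpace ℝ (Fin L)) :=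
  {w | ∀ ℓ : Fin L, ℓ ≠ j → w ℓ + ε / Real.sqrt 2 ≤ w j}

/-- The inflated argmax: `argmax^ε(w) = {j ∈ [L] : dist(w, R_j^ε) < ε}`. -/
def inflatedArgmax (L : ℕ) (ε : ℝ) (w : EuclideanSpace ℝ (Fin L)) : Set (Fin L) :=
  {j | Metric.infDist w (Rset L ε j) < ε}

open Finset

section Block

variable {ι : Type*} (A : Finset ι) (y : ι → ℝ) (ε : ℝ)

/-- For a block `A` of `n` reals, `blockDisc = n² (ε²/n + Â₁² - Â₂)` in the notation of the
statement; `blockLevel` `s` and `blockGap` `γ` solve `∑ i ∈ A, (y i - s) = γ` and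
`∑ i ∈ A, (y i - s)² = ε² - γ²`. -/
def blockDisc : ℝ := #A * ε ^ 2 + (∑ i ∈ A, y i) ^ 2 - #A * ∑ i ∈ A, y i ^ 2

def blockSpread (t : ℝ) : ℝ := (∑ i ∈ A, (y i - t)) ^ 2 + ∑ i ∈ A, (y i - t) ^ 2

def blockGap : ℝ := √(blockDisc A y ε / (#A + 1))

def blockLevel : ℝ := (∑ i ∈ A, y i - blockGap A y ε) / #A

variable {A y ε}

lemma sum_sub_const (t : ℝ) : ∑ i ∈ A, (y i - t) = ∑ i ∈ A, y i - #A * t := by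
  rw [sum_sub_distrib, sum_const, nsmul_eq_mul]

lemma sum_sq_sub_const (t : ℝ) :
    ∑ i ∈ A, (y i - t) ^ 2 = ∑ i ∈ A, y i ^ 2 - 2 * t * ∑ i ∈ A, y i + #A * t ^ 2 := by
  simp only [sub_sq, sum_add_distrib, sum_sub_distrib, ← sum_mul, ← mul_sum, sum_const,
    nsmul_eq_mul]
  ring

lemma card_mul_blockSpread (t : ℝ) :
    #A * blockSpread A y t
      = (#A + 1) * (∑ i ∈ A, (y i - t)) ^ 2 + #A * ε ^ 2 - blockDisc A y ε := by
  rw [blockSpread, sum_sub_const, sum_sq_sub_const, blockDisc]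
  ring

lemma blockSpread_le_iff (hA : A.Nonempty) (t : ℝ) :
    blockSpread A y t ≤ ε ^ 2 ↔ (#A + 1) * (∑ i ∈ A, (y i - t)) ^ 2 ≤ blockDisc A y ε := by
  have hn : (0 : ℝ) < #A := by exact_mod_cast hA.card_pos
  rw [← mul_le_mul_iff_right₀ hn, card_mul_blockSpread (ε := ε)]
  constructor <;> intro <;> linarith

lemma blockDisc_nonneg_of_blockSpread_le (hA : A.Nonempty) {t : ℝ}
    (h : blockSpread A y t ≤ ε ^ 2) :
    0 ≤ blockDisc A y ε :=
  le_trans (by positivity) ((blockSpread_le_iff hA t).1 h)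

lemma sq_blockGap (hN : 0 ≤ blockDisc A y ε) :
    (#A + 1) * blockGap A y ε ^ 2 = blockDisc A y ε := by
  rw [blockGap, Real.sq_sqrt (by positivity)]
  field_simp

lemma blockLevel_le_iff (hA : A.Nonempty) (hN : 0 ≤ blockDisc A y ε) {t : ℝ}
    (ht : ∀ i ∈ A, t ≤ y i) :
    blockLevel A y ε ≤ t ↔ blockSpread A y t ≤ ε ^ 2 := by
  have hn : (0 : ℝ) < #A := by exact_mod_cast hA.card_pos
  have hP : 0 ≤ ∑ i ∈ A, (y i - t) := sum_nonneg fun i hi => sub_nonneg.2 (ht i hi)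
  have hlevel : blockLevel A y ε ≤ t ↔ ∑ i ∈ A, (y i - t) ≤ blockGap A y ε := by
    rw [blockLevel, div_le_iff₀ hn, sum_sub_const]
    constructor <;> intro <;> linarith
  rw [hlevel, blockGap, Real.le_sqrt hP (div_nonneg hN (by positivity)),
    le_div_iff₀ (by positivity), mul_comm, blockSpread_le_iff hA]

lemma sum_sub_blockLevel (hA : A.Nonempty) :
    ∑ i ∈ A, (y i - blockLevel A y ε) = blockGap A y ε := by
  have hn : (0 : ℝ) < #A := by exact_mod_cast hA.card_pos
  rw [sum_sub_const, blockLevel]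
  field_simp
  ring

lemma sum_sq_sub_blockLevel (hA : A.Nonempty) (hN : 0 ≤ blockDisc A y ε) :
    ∑ i ∈ A, (y i - blockLevel A y ε) ^ 2 = ε ^ 2 - blockGap A y ε ^ 2 := by
  have hn : (0 : ℝ) < #A := by exact_mod_cast hA.card_pos
  have hlevel : #A * blockLevel A y ε = ∑ i ∈ A, y i - blockGap A y ε := by
    rw [blockLevel]; field_simp
  have hgap := sq_blockGap hN
  rw [sum_sq_sub_const]
  refine mul_left_cancel₀ hn.ne' ?_
  rw [blockDisc] at hgap
  linear_combination (#A * blockLevel A y ε - ∑ i ∈ A, y i - blockGap A y ε) * hlevel + hgap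

lemma blockLevel_sub_blockGap (hA : A.Nonempty) (hN : 0 ≤ blockDisc A y ε) :
    blockLevel A y ε - blockGap A y ε
      = (∑ i ∈ A, y i) / #A - √(#A + 1)
          * √(ε ^ 2 / #A + ((∑ i ∈ A, y i) / #A) ^ 2 - (∑ i ∈ A, y i ^ 2) / #A) := by
  have hn : (0 : ℝ) < #A := by exact_mod_cast hA.card_pos
  have hgap := sq_blockGap hN
  have hroot : √(#A + 1) * √(ε ^ 2 / #A + ((∑ i ∈ A, y i) / #A) ^ 2 - (∑ i ∈ A, y i ^ 2) / #A)
      = (#A + 1) * blockGap A y ε / #A := by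
    have hdisc : ε ^ 2 / #A + ((∑ i ∈ A, y i) / #A) ^ 2 - (∑ i ∈ A, y i ^ 2) / #A
        = blockDisc A y ε / #A ^ 2 := by
      rw [blockDisc]; field_simp
    have hγ : 0 ≤ blockGap A y ε := Real.sqrt_nonneg _
    rw [hdisc, ← Real.sqrt_mul (by positivity), ← hgap,
      ← Real.sqrt_sq (by positivity : 0 ≤ (#A + 1) * blockGap A y ε / #A)]
    congr 1
    field_simp
  rw [hroot, blockLevel]
  field_simp
  ring

end Block

lemma sum_posPart_sub_eq {ι : Type*} [Fintype ι] {A : Finset ι} {y : ι → ℝ} {t : ℝ}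
    (g : ℝ → ℝ) (hg : g 0 = 0) (hA : ∀ i ∈ A, t ≤ y i) (hAc : ∀ i ∉ A, y i ≤ t) :
    ∑ i, g (y i - t)⁺ = ∑ i ∈ A, g (y i - t) := by
  rw [← sum_subset (subset_univ A) fun i _ hi => by
    rw [posPart_of_nonpos (by linarith [hAc i hi]), hg]]
  exact sum_congr rfl fun i hi => by rw [posPart_of_nonneg (by linarith [hA i hi])]

lemma posPart_sq_sub_le_sq_sub {x y s u : ℝ} (hy : y ≤ u) :
    (x - s)⁺ ^ 2 - 2 * (x - s)⁺ * (u - s) ≤ (x - y) ^ 2 := by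
  rcases le_total (x - s) 0 with h | h
  · rw [posPart_of_nonpos h]; simpa using sq_nonneg (x - y)
  · rw [posPart_of_nonneg h]; nlinarith [sq_nonneg (s - y)]

section LevelSet

variable {L : ℕ} {ε s γ : ℝ} {w : EuclideanSpace ℝ (Fin L)} {j : Fin L}

lemma Rset_nonempty (L : ℕ) (ε : ℝ) (j : Fin L) : (Rset L ε j).Nonempty :=
  ⟨WithLp.toLp 2 (Pi.single j (ε / √2)), fun ℓ hℓ => by simp [hℓ]⟩

lemma dist_sq_eq_sum_sq_sub (v w : EuclideanSpace ℝ (Fin L)) :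
    dist v w ^ 2 = ∑ ℓ, (v ℓ - w ℓ) ^ 2 := by
  simp [EuclideanSpace.dist_sq_eq, Real.dist_eq, sq_abs]

lemma le_sum_sq_sub_of_mem_Rset
    (hP : ∑ ℓ, (w ℓ - s)⁺ = γ) (hV : ∑ ℓ, (w ℓ - s)⁺ ^ 2 = ε ^ 2 - γ ^ 2)
    (hj : w j ≤ s) {v : EuclideanSpace ℝ (Fin L)} (hv : v ∈ Rset L ε j) :
    ε ^ 2 - 2 * γ ^ 2 + 2 * γ * (s + ε / √2 - w j) ≤ ∑ ℓ, (w ℓ - v ℓ) ^ 2 := by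
  set u := v j - ε / √2
  have hterm : ∀ ℓ, (w ℓ - s)⁺ ^ 2 - 2 * (w ℓ - s)⁺ * (u - s)
      + (if ℓ = j then 2 * γ * (v j - w j) - γ ^ 2 else 0) ≤ (w ℓ - v ℓ) ^ 2 := by
    intro ℓ
    split_ifs with hℓ
    · subst hℓ
      rw [posPart_of_nonpos (by linarith)]
      nlinarith [sq_nonneg (w ℓ - v ℓ + γ)]
    · simpa using posPart_sq_sub_le_sq_sub (x := w ℓ) (s := s) (by linarith [hv ℓ hℓ])
  calc ε ^ 2 - 2 * γ ^ 2 + 2 * γ * (s + ε / √2 - w j)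
      = ∑ ℓ, ((w ℓ - s)⁺ ^ 2 - 2 * (w ℓ - s)⁺ * (u - s)
          + (if ℓ = j then 2 * γ * (v j - w j) - γ ^ 2 else 0)) := by
        rw [sum_add_distrib, sum_sub_distrib, ← sum_mul, ← mul_sum, hP, hV, sum_ite_eq']
        simp only [mem_univ, if_true, u]
        ring
    _ ≤ ∑ ℓ, (w ℓ - v ℓ) ^ 2 := sum_le_sum fun ℓ _ => hterm ℓ

lemma exists_mem_Rset_sum_sq_sub_le (j : Fin L) (s : ℝ) :
    ∃ v ∈ Rset L ε j,
      ∑ ℓ, (w ℓ - v ℓ) ^ 2 ≤ ∑ ℓ, (w ℓ - s)⁺ ^ 2 + (s + ε / √2 - w j)⁺ ^ 2 := by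
  refine ⟨WithLp.toLp 2 fun ℓ => if ℓ = j then max (w j) (s + ε / √2) else min (w ℓ) s,
    fun ℓ hℓ => ?_, ?_⟩
  · simp only [hℓ, ↓reduceIte]
    linarith [min_le_right (w ℓ) s, le_max_right (w j) (s + ε / √2)]
  · have hsplit : ∑ ℓ, (w ℓ - s)⁺ ^ 2 + (s + ε / √2 - w j)⁺ ^ 2
        = ∑ ℓ, ((w ℓ - s)⁺ ^ 2 + if ℓ = j then (s + ε / √2 - w j)⁺ ^ 2 else 0) := by
      rw [sum_add_distrib, sum_ite_eq', if_pos (mem_univ j)]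
    rw [hsplit]
    refine sum_le_sum fun ℓ _ => ?_
    dsimp only
    split_ifs with hℓ
    · subst hℓ
      rcases le_total (w ℓ) (s + ε / √2) with h | h
      · rw [max_eq_right h, posPart_of_nonneg (a := s + ε / √2 - w ℓ) (by linarith)]
        nlinarith [sq_nonneg (w ℓ - s)⁺]
      · rw [max_eq_left h, sub_self, zero_pow two_ne_zero]
        positivity
    · rcases le_total (w ℓ) s with h | h
      · rw [min_eq_left h, sub_self, zero_pow two_ne_zero]
        positivity
      · rw [min_eq_right h, posPart_of_nonneg (by linarith)]
        simp

theorem mem_inflatedArgmax_iff (hε : 0 < ε)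
    (hP : ∑ ℓ, (w ℓ - s)⁺ = γ) (hV : ∑ ℓ, (w ℓ - s)⁺ ^ 2 = ε ^ 2 - γ ^ 2) :
    j ∈ inflatedArgmax L ε w ↔ s + ε / √2 - γ < w j := by
  have hγ : 0 ≤ γ := hP ▸ sum_nonneg fun ℓ _ => posPart_nonneg _
  have hεγ : ε / √2 ≤ γ := by
    have h := hV ▸ hP ▸ sum_sq_le_sq_sum_of_nonneg fun ℓ _ => posPart_nonneg (w ℓ - s)
    have h2 : (γ * √2) ^ 2 = 2 * γ ^ 2 := by rw [mul_pow, Real.sq_sqrt zero_le_two]; ring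
    rw [div_le_iff₀ (by positivity)]
    exact (pow_le_pow_iff_left₀ hε.le (by positivity) two_ne_zero).1 (by linarith)
  rw [inflatedArgmax, Set.mem_ofPred_eq, Metric.infDist_lt_iff (Rset_nonempty L ε j)]
  constructor
  · rintro ⟨v, hv, hdist⟩
    by_contra! hj
    have hlow := le_sum_sq_sub_of_mem_Rset hP hV (by linarith) hv
    rw [← dist_sq_eq_sum_sq_sub] at hlow
    nlinarith [dist_nonneg (x := w) (y := v)]
  · intro hj
    obtain ⟨v, hv, hup⟩ := exists_mem_Rset_sum_sq_sub_le (w := w) (ε := ε) j s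
    refine ⟨v, hv, ?_⟩
    have hpos : (s + ε / √2 - w j)⁺ < γ :=
      max_lt (by linarith) (by linarith [show 0 < ε / √2 by positivity])
    rw [← dist_sq_eq_sum_sq_sub, hV] at hup
    nlinarith [dist_nonneg (x := w) (y := v), posPart_nonneg (s + ε / √2 - w j)]

end LevelSet

section Sorted

variable {L : ℕ} {x : Fin L → ℝ} {ε : ℝ} {k0 : Fin L}

def admissibleCutoffs (x : Fin L → ℝ) (ε : ℝ) : Set (Fin L) :=
  {k | blockSpread (Iic k) x (x k) ≤ ε ^ 2}

lemma blockDisc_Iic_nonneg (hk0 : k0 ∈ admissibleCutoffs x ε) :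
    0 ≤ blockDisc (Iic k0) x ε :=
  blockDisc_nonneg_of_blockSpread_le nonempty_Iic hk0

lemma blockLevel_Iic_le (hx : Antitone x) (hk0 : k0 ∈ admissibleCutoffs x ε) {i : Fin L}
    (hi : i ≤ k0) : blockLevel (Iic k0) x ε ≤ x i :=
  le_trans ((blockLevel_le_iff nonempty_Iic (blockDisc_Iic_nonneg hk0)
    fun _ hℓ => hx (mem_Iic.1 hℓ)).2 hk0) (hx hi)

lemma lt_blockLevel_Iic (hx : Antitone x) (hk0 : IsGreatest (admissibleCutoffs x ε) k0)
    {i : Fin L} (hi : k0 < i) : x i < blockLevel (Iic k0) x ε := by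
  have hmax : ¬IsMax k0 := not_isMax_of_lt hi
  set k1 := Order.succ k0
  have hk01 : k0 < k1 := Order.lt_succ_of_not_isMax hmax
  have hIic : Iic k1 = insert k1 (Iic k0) := by
    rw [← Iio_insert, Iio_succ_eq_Iic_of_not_isMax hmax]
  have hk1 : k1 ∉ admissibleCutoffs x ε := fun h => (hk01.trans_le (hk0.2 h)).false
  -- The term of `k1` in the block `Iic k1` vanishes at level `x k1`.
  have hspread : ¬blockSpread (Iic k0) x (x k1) ≤ ε ^ 2 := by
    have hk1_notin : k1 ∉ Iic k0 := fun h => hk01.not_ge (mem_Iic.1 h)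
    simpa only [admissibleCutoffs, blockSpread, Set.mem_ofPred_eq, hIic, sum_insert hk1_notin,
      sub_self, zero_add, ne_eq, two_ne_zero, not_false_eq_true, zero_pow] using hk1
  rw [← blockLevel_le_iff nonempty_Iic (blockDisc_Iic_nonneg hk0.1)
    fun _ hℓ => hx ((mem_Iic.1 hℓ).trans hk01.le), not_le] at hspread
  exact (hx (Order.succ_le_of_lt hi)).trans_lt hspread

end Sorted

/-- `w (σ ℓ)` is the order statistic `w_{[ℓ+1]}` and `k̂(w) = k0 + 1`. -/
theorem inflatedArgmax_compute_general (L : ℕ) (ε : ℝ) (hε : 0 < ε)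
    (w : EuclideanSpace ℝ (Fin L)) (σ : Equiv.Perm (Fin L))
    (hsort : Antitone fun i : Fin L => w (σ i))
    (k0 : Fin L)
    (hk0 : IsGreatest {k : Fin L |
        (∑ ℓ ∈ Finset.Iic k, (w (σ ℓ) - w (σ k)))^2
          + ∑ ℓ ∈ Finset.Iic k, (w (σ ℓ) - w (σ k))^2 ≤ ε^2} k0) :
    inflatedArgmax L ε w =
      {j : Fin L | w j > ε / Real.sqrt 2
        + (∑ ℓ ∈ Finset.Iic k0, w (σ ℓ)) / (((k0 : ℕ) : ℝ) + 1)
        - Real.sqrt (((k0 : ℕ) : ℝ) + 2)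
          * Real.sqrt (ε^2 / (((k0 : ℕ) : ℝ) + 1)
            + ((∑ ℓ ∈ Finset.Iic k0, w (σ ℓ)) / (((k0 : ℕ) : ℝ) + 1))^2
            - (∑ ℓ ∈ Finset.Iic k0, (w (σ ℓ))^2) / (((k0 : ℕ) : ℝ) + 1))} := by
  set x : Fin L → ℝ := fun i => w (σ i)
  have hA : ∀ i ∈ Iic k0, blockLevel (Iic k0) x ε ≤ x i :=
    fun i hi => blockLevel_Iic_le hsort hk0.1 (mem_Iic.1 hi)
  have hAc : ∀ i ∉ Iic k0, x i ≤ blockLevel (Iic k0) x ε :=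
    fun i hi => (lt_blockLevel_Iic hsort hk0 (not_le.1 (mt mem_Iic.2 hi))).le
  have hP : ∑ ℓ, (w ℓ - blockLevel (Iic k0) x ε)⁺ = blockGap (Iic k0) x ε := by
    rw [← Equiv.sum_comp σ, ← sum_sub_blockLevel nonempty_Iic]
    exact sum_posPart_sub_eq (fun a => a) rfl hA hAc
  have hV : ∑ ℓ, (w ℓ - blockLevel (Iic k0) x ε)⁺ ^ 2 = ε ^ 2 - blockGap (Iic k0) x ε ^ 2 := by
    rw [← Equiv.sum_comp σ, ← sum_sq_sub_blockLevel nonempty_Iic (blockDisc_Iic_nonneg hk0.1)]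
    exact sum_posPart_sub_eq (· ^ 2) (zero_pow two_ne_zero) hA hAc
  have hthreshold := blockLevel_sub_blockGap nonempty_Iic (blockDisc_Iic_nonneg (ε := ε) hk0.1)
  rw [Fin.card_Iic, Nat.cast_add_one, add_assoc, one_add_one_eq_two] at hthreshold
  ext j
  rw [mem_inflatedArgmax_iff hε hP hV, Set.mem_ofPred_eq, gt_iff_lt]
  constructor <;> intro <;> linarith

/-- Computing the inflated argmax.  Here `σ` is a permutation sorting the entries of `w`
in nonincreasing order, so that `w (σ ℓ)` is the `(ℓ+1)`-st order statistic `w_{[ℓ+1]}`,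
and `k0 : Fin L` is such that `k̂(w) = k0 + 1` is the largest `k ∈ [L]` satisfying
`(Σ_{ℓ=1}^k (w_{[ℓ]} − w_{[k]}))² + Σ_{ℓ=1}^k (w_{[ℓ]} − w_{[k]})² ≤ ε²`.
Then `argmax^ε(w) = {j : w_j > ε/√2 + Â₁ − √(k̂+1)·√(ε²/k̂ + Â₁² − Â₂)}`,
where `Â₁ = (w_{[1]} + … + w_{[k̂]})/k̂` and `Â₂ = (w_{[1]}² + … + w_{[k̂]}²)/k̂`. -/
theorem inflatedArgmax_compute (L : ℕ) (hL : 2 ≤ L) (ε : ℝ) (hε : 0 < ε)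
    (w : EuclideanSpace ℝ (Fin L)) (σ : Equiv.Perm (Fin L))
    (hsort : Antitone fun i : Fin L => w (σ i))
    (k0 : Fin L)
    (hk0 : IsGreatest {k : Fin L |
        (∑ ℓ ∈ Finset.Iic k, (w (σ ℓ) - w (σ k)))^2
          + ∑ ℓ ∈ Finset.Iic k, (w (σ ℓ) - w (σ k))^2 ≤ ε^2} k0) :
    inflatedArgmax L ε w =
      {j : Fin L | w j > ε / Real.sqrt 2
        + (∑ ℓ ∈ Finset.Iic k0, w (σ ℓ)) / (((k0 : ℕ) : ℝ) + 1)
        - Real.sqrt (((k0 : ℕ) : ℝ) + 2)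
          * Real.sqrt (ε^2 / (((k0 : ℕ) : ℝ) + 1)
            + ((∑ ℓ ∈ Finset.Iic k0, w (σ ℓ)) / (((k0 : ℕ) : ℝ) + 1))^2
            - (∑ ℓ ∈ Finset.Iic k0, (w (σ ℓ))^2) / (((k0 : ℕ) : ℝ) + 1))} :=
  inflatedArgmax_compute_general L ε hε w σ hsort k0 hk0
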